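/- arXiv:2412.00551 — 2 statements merged into one kernel-verified Lean document; each statement's English description precedes it below -/
import Mathlib

section
/- Let V ∈ Gr(2,4) be a 2-dimensional subspace of ℝ⁴ that is totally nonnegative, i.e., the row span of a 2×4 matrix all of whose 2×2 minors are ≥ 0. Then every nonzero vector v ∈ V, viewed as a sequence (v_1, v_2, v_3, v_4), changes sign at most once (after deleting zeros, the sequence of signs has at most one alternation). -/
noncomputable def rowSpan {k n : ℕ} (A : Matrix (Fin k) (Fin n) ℝ) : Submodule ℝ (Fin n → ℝ) :=
  Submodule.span ℝ (Set.range fun i => A i)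

noncomputable def minorMat {k n : ℕ} (A : Matrix (Fin k) (Fin n) ℝ) (I : Finset (Fin n))
    (h : I.card = k) : ℝ :=
  Matrix.det (Matrix.of fun i j : Fin k => A i ((I.orderIsoOfFin h j : Fin n)))

/-- The number of sign changes of a vector `v`: the number of pairs `i < j` with
`vᵢ · vⱼ < 0` and `v_l = 0` for all `i < l < j`. -/
noncomputable def signChanges {n : ℕ} (v : Fin n → ℝ) : ℕ :=
  Set.ncard {p : Fin n × Fin n |
    p.1 < p.2 ∧ v p.1 * v p.2 < 0 ∧ ∀ l, p.1 < l → l < p.2 → v l = 0}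

/-- The `2 × 2` minor of a `2 × n` matrix on columns `x, y` (in that order). -/
def dd {n : ℕ} (A : Matrix (Fin 2) (Fin n) ℝ) (x y : Fin n) : ℝ :=
  A 0 x * A 1 y - A 0 y * A 1 x

lemma minor_pair (A : Matrix (Fin 2) (Fin 4) ℝ)
    (hminors : ∀ (I : Finset (Fin 4)) (h : I.card = 2), 0 ≤ minorMat A I h)
    (x y : Fin 4) (hxy : x < y) : 0 ≤ dd A x y := by
  have hcard : ({x, y} : Finset (Fin 4)).card = 2 := by
    rw [Finset.card_insert_of_notMem (by simp [hxy.ne]), Finset.card_singleton]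
  have hmin : ({x, y} : Finset (Fin 4)).min' (by simp) = x := by
    apply le_antisymm (Finset.min'_le _ x (by simp))
    apply Finset.le_min'
    intro z hz
    simp only [Finset.mem_insert, Finset.mem_singleton] at hz
    rcases hz with rfl | rfl
    · exact le_rfl
    · exact hxy.le
  have hmax : ({x, y} : Finset (Fin 4)).max' (by simp) = y := by
    apply le_antisymm
    · apply Finset.max'_le
      intro z hz
      simp only [Finset.mem_insert, Finset.mem_singleton] at hz
      rcases hz with rfl | rfl
      · exact hxy.le
      · exact le_rfl
    · exact Finset.le_max' _ y (by simp)
  have h0 : ({x, y} : Finset (Fin 4)).orderEmbOfFin hcard 0 = x := by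
    have : (0 : Fin 2) = ⟨0, by norm_num⟩ := rfl
    rw [this, Finset.orderEmbOfFin_zero hcard (by norm_num)]
    exact hmin
  have h1 : ({x, y} : Finset (Fin 4)).orderEmbOfFin hcard 1 = y := by
    have : (1 : Fin 2) = ⟨2 - 1, by norm_num⟩ := rfl
    rw [this, Finset.orderEmbOfFin_last hcard (by norm_num)]
    exact hmax
  have := hminors {x, y} hcard
  rw [minorMat, Matrix.det_fin_two] at this
  simpa [dd, h0, h1] using this

lemma aux_tri {v : Fin 4 → ℝ} {i1 j1 i2 j2 : Fin 4}
    (h11 : i1 < j1) (h12 : v i1 * v j1 < 0) (_hz1 : ∀ l, i1 < l → l < j1 → v l = 0)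
    (h21 : i2 < j2) (h22 : v i2 * v j2 < 0) (_hz2 : ∀ l, i2 < l → l < j2 → v l = 0)
    (h : i1 < i2) :
    ∃ a b c : Fin 4, a < b ∧ b < c ∧ v a * v b < 0 ∧ v b * v c < 0 := by
  have hvj1 : v j1 ≠ 0 := by
    intro h0; rw [h0, mul_zero] at h12; exact lt_irrefl 0 h12
  have hvi2 : v i2 ≠ 0 := by
    intro h0; rw [h0, zero_mul] at h22; exact lt_irrefl 0 h22
  have hj1i2 : j1 ≤ i2 := by
    by_contra hlt
    push_neg at hlt
    exact hvi2 (_hz1 i2 h hlt)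
  rcases eq_or_lt_of_le hj1i2 with rfl | hlt
  · exact ⟨i1, j1, j2, h11, h21, h12, h22⟩
  · rcases lt_trichotomy (v j1 * v i2) 0 with hs | hs | hs
    · exact ⟨i1, j1, i2, h11, hlt, h12, hs⟩
    · exact absurd hs (mul_ne_zero hvj1 hvi2)
    · refine ⟨i1, j1, j2, h11, hlt.trans h21, h12, ?_⟩
      nlinarith [sq_nonneg (v i2), mul_pos hs (neg_pos.mpr h22)]

set_option maxHeartbeats 2000000 in
/-- If `V ∈ Gr(2,4)` is totally nonnegative, i.e. the row span of a `2 × 4`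
matrix of rank 2 all of whose `2 × 2` minors are nonnegative, then every nonzero vector of
`V` changes sign at most once. -/
theorem stmt10 (A : Matrix (Fin 2) (Fin 4) ℝ) (hrank : A.rank = 2)
    (hminors : ∀ (I : Finset (Fin 4)) (h : I.card = 2), 0 ≤ minorMat A I h) :
    ∀ v, v ∈ rowSpan A → v ≠ 0 → signChanges v ≤ 1 := by
  intro v hv hv0
  by_contra hle
  push_neg at hle
  -- extract two distinct sign-change pairs
  rw [signChanges, Set.one_lt_ncard_iff (Set.toFinite _)] at hle
  obtain ⟨p, q, hp, hq, hpq⟩ := hle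
  obtain ⟨hp1, hp2, hp3⟩ := hp
  obtain ⟨hq1, hq2, hq3⟩ := hq
  -- get a triple with two consecutive sign alternations
  obtain ⟨i, j, k, hij, hjk, hvij, hvjk⟩ :
      ∃ a b c : Fin 4, a < b ∧ b < c ∧ v a * v b < 0 ∧ v b * v c < 0 := by
    rcases lt_trichotomy p.1 q.1 with h | h | h
    · exact aux_tri hp1 hp2 hp3 hq1 hq2 hq3 h
    · exfalso
      have hne : p.2 ≠ q.2 := by
        intro h2
        exact hpq (Prod.ext h h2)
      rcases lt_or_gt_of_ne hne with h2 | h2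
      · have : v p.2 = 0 := hq3 p.2 (h ▸ hp1) h2
        rw [this, mul_zero] at hp2
        exact lt_irrefl 0 hp2
      · have : v q.2 = 0 := hp3 q.2 (h ▸ hq1) h2
        rw [this, mul_zero] at hq2
        exact lt_irrefl 0 hq2
    · exact aux_tri hq1 hq2 hq3 hp1 hp2 hp3 h
  clear hp1 hp2 hp3 hq1 hq2 hq3 hpq
  -- minors are nonnegative
  have hD : ∀ x y : Fin 4, x < y → 0 ≤ dd A x y := minor_pair A hminors
  -- express v in terms of the rows
  rw [rowSpan, Submodule.mem_span_range_iff_exists_fun] at hv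
  obtain ⟨c, hc⟩ := hv
  have hvx : ∀ x, v x = c 0 * A 0 x + c 1 * A 1 x := by
    intro x
    rw [← hc]
    simp [Fin.sum_univ_two]
  have hvj : v j ≠ 0 := by
    intro h0; rw [h0, zero_mul] at hvjk; exact lt_irrefl 0 hvjk
  have hvj2 : 0 < v j ^ 2 := lt_of_le_of_ne (sq_nonneg _) (Ne.symm (pow_ne_zero 2 hvj))
  have hik : i < k := hij.trans hjk
  -- three-term Plücker-type identity
  have key : v j ^ 2 * dd A i k = (v i * v j) * dd A j k + (v j * v k) * dd A i j := by
    simp only [hvx, dd]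
    ring
  have hDij := hD i j hij
  have hDik := hD i k hik
  have hDjk := hD j k hjk
  have hdij : dd A i j = 0 := by nlinarith [mul_nonneg hvj2.le hDik]
  have hdjk : dd A j k = 0 := by nlinarith [mul_nonneg hvj2.le hDik]
  have hdik : dd A i k = 0 := by nlinarith
  -- column j is nonzero
  set N : ℝ := A 0 j ^ 2 + A 1 j ^ 2 with hN
  have hNpos : 0 < N := by
    rcases lt_or_eq_of_le (by positivity : (0:ℝ) ≤ N) with h | h
    · exact h
    · exfalso
      have h0 : A 0 j = 0 ∧ A 1 j = 0 := by constructor <;> nlinarith [sq_nonneg (A 0 j), sq_nonneg (A 1 j)]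
      apply hvj
      rw [hvx, h0.1, h0.2]
      ring
  -- columns i and k are negative multiples of column j
  set α : ℝ := (A 0 i * A 0 j + A 1 i * A 1 j) / N with hα
  set β : ℝ := (A 0 k * A 0 j + A 1 k * A 1 j) / N with hβ
  have hAi0 : A 0 i = α * A 0 j := by
    rw [hα]
    field_simp
    simp only [dd] at hdij
    linear_combination A 1 j * hdij
  have hAi1 : A 1 i = α * A 1 j := by
    rw [hα]
    field_simp
    simp only [dd] at hdij
    linear_combination (-(A 0 j)) * hdij
  have hAk0 : A 0 k = β * A 0 j := by
    rw [hβ]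
    field_simp
    simp only [dd] at hdjk
    linear_combination (-(A 1 j)) * hdjk
  have hAk1 : A 1 k = β * A 1 j := by
    rw [hβ]
    field_simp
    simp only [dd] at hdjk
    linear_combination A 0 j * hdjk
  have hvi : v i = α * v j := by rw [hvx, hvx, hAi0, hAi1]; ring
  have hvk : v k = β * v j := by rw [hvx, hvx, hAk0, hAk1]; ring
  have hαneg : α < 0 := by
    have h1 : v i * v j = α * v j ^ 2 := by rw [hvi]; ring
    nlinarith [hvij, hvj2]
  have hβneg : β < 0 := by
    have h1 : v j * v k = β * v j ^ 2 := by rw [hvk]; ring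
    nlinarith [hvjk, hvj2]
  -- the fourth index
  have hij' : i.val < j.val := hij
  have hjk' : j.val < k.val := hjk
  have hk4 : k.val < 4 := k.isLt
  obtain ⟨l, hli, hlj, hlk⟩ : ∃ l : Fin 4, l ≠ i ∧ l ≠ j ∧ l ≠ k := by
    refine ⟨⟨6 - (i.val + j.val + k.val), by omega⟩, ?_, ?_, ?_⟩ <;>
      · simp only [ne_eq, Fin.ext_iff]
        omega
  have hdi : ∀ y, dd A i y = α * dd A j y := by
    intro y; simp only [dd, hAi0, hAi1]; ring
  have hdk : ∀ y, dd A k y = β * dd A j y := by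
    intro y; simp only [dd, hAk0, hAk1]; ring
  have hanti : ∀ x y : Fin 4, dd A x y = - dd A y x := by
    intro x y; simp only [dd]; ring
  -- show dd A j l = 0
  have hdjl : dd A j l = 0 := by
    rcases lt_trichotomy l j with h | h | h
    · -- l < j < k : dd l j ≥ 0 and dd l k ≥ 0
      have h1 : 0 ≤ dd A l j := hD l j h
      have h2 : 0 ≤ dd A l k := hD l k (h.trans hjk)
      have h3 : dd A k l = β * dd A j l := hdk l
      have h4 : dd A j l = - dd A l j := hanti j l
      have h5 : dd A k l = - dd A l k := hanti k l
      have h6 : β * dd A j l ≤ 0 := by rw [← h3, h5]; linarith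
      have h7 : 0 ≤ dd A j l := by
        by_contra h8
        push_neg at h8
        have := mul_pos_of_neg_of_neg hβneg h8
        linarith
      linarith
    · exact absurd h hlj
    · -- j < l : dd j l ≥ 0 and (i < j < l) dd i l ≥ 0
      have h1 : 0 ≤ dd A j l := hD j l h
      have h2 : 0 ≤ dd A i l := hD i l (hij.trans h)
      have h3 : dd A i l = α * dd A j l := hdi l
      have h4 : dd A j l ≤ 0 := by
        by_contra h5
        push_neg at h5
        have := mul_neg_of_neg_of_pos hαneg h5
        linarith
      linarith
  have hdil : dd A i l = 0 := by rw [hdi l, hdjl, mul_zero]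
  have hdkl : dd A k l = 0 := by rw [hdk l, hdjl, mul_zero]
  -- every column is a multiple of column j
  have hcover : ∀ x : Fin 4, x = i ∨ x = j ∨ x = k ∨ x = l := by
    intro x
    have hx4 : x.val < 4 := x.isLt
    have hl4 : l.val < 4 := l.isLt
    have hli' : l.val ≠ i.val := fun h => hli (Fin.ext h)
    have hlj' : l.val ≠ j.val := fun h => hlj (Fin.ext h)
    have hlk' : l.val ≠ k.val := fun h => hlk (Fin.ext h)
    simp only [Fin.ext_iff]
    omega
  have hAl0 : A 0 l = (A 0 l * A 0 j + A 1 l * A 1 j) / N * A 0 j := by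
    field_simp
    simp only [dd] at hdjl
    linear_combination (-(A 1 j)) * hdjl
  have hAl1 : A 1 l = (A 0 l * A 0 j + A 1 l * A 1 j) / N * A 1 j := by
    field_simp
    simp only [dd] at hdjl
    linear_combination A 0 j * hdjl
  have hcolmul : ∀ x : Fin 4, ∃ γ : ℝ, A 0 x = γ * A 0 j ∧ A 1 x = γ * A 1 j := by
    intro x
    rcases hcover x with h | h | h | h
    · rw [h]; exact ⟨α, hAi0, hAi1⟩
    · rw [h]; exact ⟨1, by ring, by ring⟩
    · rw [h]; exact ⟨β, hAk0, hAk1⟩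
    · rw [h]; exact ⟨(A 0 l * A 0 j + A 1 l * A 1 j) / N, hAl0, hAl1⟩
  -- conclude rank ≤ 1, contradicting rank = 2
  have hcj : (fun r : Fin 2 => A r j) ≠ 0 := by
    intro h0
    apply hvj
    rw [hvx]
    have h1 : A 0 j = 0 := congrFun h0 0
    have h2 : A 1 j = 0 := congrFun h0 1
    rw [h1, h2]; ring
  have hrle : A.rank ≤ 1 := by
    rw [Matrix.rank]
    have hsub : LinearMap.range A.mulVecLin ≤ Submodule.span ℝ {fun r : Fin 2 => A r j} := by
      rw [Matrix.range_mulVecLin, Submodule.span_le]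
      rintro _ ⟨x, rfl⟩
      rw [SetLike.mem_coe, Submodule.mem_span_singleton]
      obtain ⟨γ, hγ0, hγ1⟩ := hcolmul x
      refine ⟨γ, ?_⟩
      funext r
      fin_cases r
      · simpa using hγ0.symm
      · simpa using hγ1.symm
    calc Module.finrank ℝ (LinearMap.range A.mulVecLin)
        ≤ Module.finrank ℝ (Submodule.span ℝ {fun r : Fin 2 => A r j}) :=
          Submodule.finrank_mono hsub
      _ = 1 := finrank_span_singleton hcj
  omega
end

section
/- Let V be a totally nonnegative 2-dimensional subspace of ℝ⁴ (row span of a 2×4 matrix with all 2×2 minors ≥ 0, at least one nonzero). Then V contains no vector whose sign pattern (sign v_1, sign v_2, sign v_3, sign v_4) equals (+,+,−,+), (+,−,+,+), (+,−,+,−), or (+,−,−,+). -/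
private lemma minor_pair_s11 (A : Matrix (Fin 2) (Fin 4) ℝ) (i j : Fin 4) (hij : i < j)
    (h : ({i,j} : Finset (Fin 4)).card = 2) :
    minorMat A {i,j} h = A 0 i * A 1 j - A 0 j * A 1 i := by
  have hu := Finset.orderEmbOfFin_unique h (f := ![i,j])
    (by intro x; fin_cases x <;> simp) (by
      intro a b hab
      fin_cases a <;> fin_cases b <;> simp_all)
  rw [minorMat, Matrix.det_fin_two]
  simp only [Matrix.of_apply, Finset.coe_orderIsoOfFin_apply, ← hu]
  simp

private lemma mul_zero_of (x y : ℝ) (hx : 0 < x) (hxy : x * y = 0) : y = 0 :=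
  (mul_eq_zero.mp hxy).resolve_left (ne_of_gt hx)

/-- A totally nonnegative 2-dimensional subspace of `ℝ⁴` (row span of a
rank-2 matrix with all `2 × 2` minors `≥ 0`, at least one nonzero) contains no vector with
sign pattern `(+,+,−,+)`, `(+,−,+,+)`, `(+,−,+,−)`, or `(+,−,−,+)`. -/
theorem stmt11 (A : Matrix (Fin 2) (Fin 4) ℝ) (hrank : A.rank = 2)
    (hminors : ∀ (I : Finset (Fin 4)) (h : I.card = 2), 0 ≤ minorMat A I h)
    (hnz : ∃ (I : Finset (Fin 4)) (h : I.card = 2), minorMat A I h ≠ 0) :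
    ∀ v, v ∈ rowSpan A →
      ¬ ((0 < v 0 ∧ 0 < v 1 ∧ v 2 < 0 ∧ 0 < v 3) ∨
         (0 < v 0 ∧ v 1 < 0 ∧ 0 < v 2 ∧ 0 < v 3) ∨
         (0 < v 0 ∧ v 1 < 0 ∧ 0 < v 2 ∧ v 3 < 0) ∨
         (0 < v 0 ∧ v 1 < 0 ∧ v 2 < 0 ∧ 0 < v 3)) := by
  intro v hv hpat
  rw [rowSpan, Submodule.mem_span_range_iff_exists_fun] at hv
  obtain ⟨c, hc⟩ := hv
  have hvj : ∀ j, v j = c 0 * A 0 j + c 1 * A 1 j := fun j => by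
    rw [← hc]; simp [Fin.sum_univ_two]

  have hP : ∀ i j : Fin 4, i < j → 0 ≤ A 0 i * A 1 j - A 0 j * A 1 i := by
    intro i j hij
    have hcard : ({i,j} : Finset (Fin 4)).card = 2 := by
      rw [Finset.card_insert_of_notMem (by simp [ne_of_lt hij]), Finset.card_singleton]
    have := hminors {i,j} hcard
    rwa [minor_pair_s11 A i j hij hcard] at this
  have h01 : 0 ≤ (A 0 0 * A 1 1 - A 0 1 * A 1 0) := hP 0 1 (by decide)
  have h02 : 0 ≤ (A 0 0 * A 1 2 - A 0 2 * A 1 0) := hP 0 2 (by decide)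
  have h03 : 0 ≤ (A 0 0 * A 1 3 - A 0 3 * A 1 0) := hP 0 3 (by decide)
  have h12 : 0 ≤ (A 0 1 * A 1 2 - A 0 2 * A 1 1) := hP 1 2 (by decide)
  have h13 : 0 ≤ (A 0 1 * A 1 3 - A 0 3 * A 1 1) := hP 1 3 (by decide)
  have h23 : 0 ≤ (A 0 2 * A 1 3 - A 0 3 * A 1 2) := hP 2 3 (by decide)
  have T012 : v 0 * (A 0 1 * A 1 2 - A 0 2 * A 1 1) - v 1 * (A 0 0 * A 1 2 - A 0 2 * A 1 0) + v 2 * (A 0 0 * A 1 1 - A 0 1 * A 1 0) = 0 := by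
    simp only [hvj]; ring
  have T013 : v 0 * (A 0 1 * A 1 3 - A 0 3 * A 1 1) - v 1 * (A 0 0 * A 1 3 - A 0 3 * A 1 0) + v 3 * (A 0 0 * A 1 1 - A 0 1 * A 1 0) = 0 := by
    simp only [hvj]; ring
  have T023 : v 0 * (A 0 2 * A 1 3 - A 0 3 * A 1 2) - v 2 * (A 0 0 * A 1 3 - A 0 3 * A 1 0) + v 3 * (A 0 0 * A 1 2 - A 0 2 * A 1 0) = 0 := by
    simp only [hvj]; ring
  have T123 : v 1 * (A 0 2 * A 1 3 - A 0 3 * A 1 2) - v 2 * (A 0 1 * A 1 3 - A 0 3 * A 1 1) + v 3 * (A 0 1 * A 1 2 - A 0 2 * A 1 1) = 0 := by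
    simp only [hvj]; ring
  have hall : (A 0 0 * A 1 1 - A 0 1 * A 1 0) = 0 ∧ (A 0 0 * A 1 2 - A 0 2 * A 1 0) = 0 ∧ (A 0 0 * A 1 3 - A 0 3 * A 1 0) = 0 ∧ (A 0 1 * A 1 2 - A 0 2 * A 1 1) = 0 ∧ (A 0 1 * A 1 3 - A 0 3 * A 1 1) = 0 ∧ (A 0 2 * A 1 3 - A 0 3 * A 1 2) = 0 := by
    rcases hpat with ⟨h0, h1, h2, h3⟩ | ⟨h0, h1, h2, h3⟩ | ⟨h0, h1, h2, h3⟩ | ⟨h0, h1, h2, h3⟩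
    · have a1 : 0 ≤ v 0 * (A 0 2 * A 1 3 - A 0 3 * A 1 2) := mul_nonneg h0.le h23
      have a2 : 0 ≤ (-v 2) * (A 0 0 * A 1 3 - A 0 3 * A 1 0) := mul_nonneg (by linarith : (0:ℝ) ≤ -v 2) h03
      have a3 : 0 ≤ v 3 * (A 0 0 * A 1 2 - A 0 2 * A 1 0) := mul_nonneg h3.le h02
      have e23 : (A 0 2 * A 1 3 - A 0 3 * A 1 2) = 0 := mul_zero_of (v 0) _ h0 (by linarith)
      have e03 : (A 0 0 * A 1 3 - A 0 3 * A 1 0) = 0 := mul_zero_of (-v 2) _ (by linarith : (0:ℝ) < -v 2) (by linarith)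
      have e02 : (A 0 0 * A 1 2 - A 0 2 * A 1 0) = 0 := mul_zero_of (v 3) _ h3 (by linarith)
      have f1 : v 1 * (A 0 2 * A 1 3 - A 0 3 * A 1 2) = 0 := mul_eq_zero_of_right _ e23
      have b1 : 0 ≤ (-v 2) * (A 0 1 * A 1 3 - A 0 3 * A 1 1) := mul_nonneg (by linarith : (0:ℝ) ≤ -v 2) h13
      have b2 : 0 ≤ v 3 * (A 0 1 * A 1 2 - A 0 2 * A 1 1) := mul_nonneg h3.le h12
      have e13 : (A 0 1 * A 1 3 - A 0 3 * A 1 1) = 0 := mul_zero_of (-v 2) _ (by linarith : (0:ℝ) < -v 2) (by linarith)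
      have e12 : (A 0 1 * A 1 2 - A 0 2 * A 1 1) = 0 := mul_zero_of (v 3) _ h3 (by linarith)
      have g1 : v 0 * (A 0 1 * A 1 2 - A 0 2 * A 1 1) = 0 := mul_eq_zero_of_right _ e12
      have g2 : v 1 * (A 0 0 * A 1 2 - A 0 2 * A 1 0) = 0 := mul_eq_zero_of_right _ e02
      have e01 : (A 0 0 * A 1 1 - A 0 1 * A 1 0) = 0 := mul_zero_of (-v 2) _ (by linarith : (0:ℝ) < -v 2) (by linarith)
      exact ⟨e01, e02, e03, e12, e13, e23⟩
    · have a1 : 0 ≤ v 0 * (A 0 1 * A 1 3 - A 0 3 * A 1 1) := mul_nonneg h0.le h13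
      have a2 : 0 ≤ (-v 1) * (A 0 0 * A 1 3 - A 0 3 * A 1 0) := mul_nonneg (by linarith : (0:ℝ) ≤ -v 1) h03
      have a3 : 0 ≤ v 3 * (A 0 0 * A 1 1 - A 0 1 * A 1 0) := mul_nonneg h3.le h01
      have e13 : (A 0 1 * A 1 3 - A 0 3 * A 1 1) = 0 := mul_zero_of (v 0) _ h0 (by linarith)
      have e03 : (A 0 0 * A 1 3 - A 0 3 * A 1 0) = 0 := mul_zero_of (-v 1) _ (by linarith : (0:ℝ) < -v 1) (by linarith)
      have e01 : (A 0 0 * A 1 1 - A 0 1 * A 1 0) = 0 := mul_zero_of (v 3) _ h3 (by linarith)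
      have f1 : v 2 * (A 0 0 * A 1 1 - A 0 1 * A 1 0) = 0 := mul_eq_zero_of_right _ e01
      have b1 : 0 ≤ v 0 * (A 0 1 * A 1 2 - A 0 2 * A 1 1) := mul_nonneg h0.le h12
      have b2 : 0 ≤ (-v 1) * (A 0 0 * A 1 2 - A 0 2 * A 1 0) := mul_nonneg (by linarith : (0:ℝ) ≤ -v 1) h02
      have e12 : (A 0 1 * A 1 2 - A 0 2 * A 1 1) = 0 := mul_zero_of (v 0) _ h0 (by linarith)
      have e02 : (A 0 0 * A 1 2 - A 0 2 * A 1 0) = 0 := mul_zero_of (-v 1) _ (by linarith : (0:ℝ) < -v 1) (by linarith)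
      have g1 : v 2 * (A 0 1 * A 1 3 - A 0 3 * A 1 1) = 0 := mul_eq_zero_of_right _ e13
      have g2 : v 3 * (A 0 1 * A 1 2 - A 0 2 * A 1 1) = 0 := mul_eq_zero_of_right _ e12
      have e23 : (A 0 2 * A 1 3 - A 0 3 * A 1 2) = 0 := mul_zero_of (-v 1) _ (by linarith : (0:ℝ) < -v 1) (by linarith)
      exact ⟨e01, e02, e03, e12, e13, e23⟩
    · have a1 : 0 ≤ v 0 * (A 0 1 * A 1 2 - A 0 2 * A 1 1) := mul_nonneg h0.le h12
      have a2 : 0 ≤ (-v 1) * (A 0 0 * A 1 2 - A 0 2 * A 1 0) := mul_nonneg (by linarith : (0:ℝ) ≤ -v 1) h02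
      have a3 : 0 ≤ v 2 * (A 0 0 * A 1 1 - A 0 1 * A 1 0) := mul_nonneg h2.le h01
      have e12 : (A 0 1 * A 1 2 - A 0 2 * A 1 1) = 0 := mul_zero_of (v 0) _ h0 (by linarith)
      have e02 : (A 0 0 * A 1 2 - A 0 2 * A 1 0) = 0 := mul_zero_of (-v 1) _ (by linarith : (0:ℝ) < -v 1) (by linarith)
      have e01 : (A 0 0 * A 1 1 - A 0 1 * A 1 0) = 0 := mul_zero_of (v 2) _ h2 (by linarith)
      have f1 : v 3 * (A 0 1 * A 1 2 - A 0 2 * A 1 1) = 0 := mul_eq_zero_of_right _ e12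
      have b1 : 0 ≤ (-v 1) * (A 0 2 * A 1 3 - A 0 3 * A 1 2) := mul_nonneg (by linarith : (0:ℝ) ≤ -v 1) h23
      have b2 : 0 ≤ v 2 * (A 0 1 * A 1 3 - A 0 3 * A 1 1) := mul_nonneg h2.le h13
      have e23 : (A 0 2 * A 1 3 - A 0 3 * A 1 2) = 0 := mul_zero_of (-v 1) _ (by linarith : (0:ℝ) < -v 1) (by linarith)
      have e13 : (A 0 1 * A 1 3 - A 0 3 * A 1 1) = 0 := mul_zero_of (v 2) _ h2 (by linarith)
      have g1 : v 0 * (A 0 1 * A 1 3 - A 0 3 * A 1 1) = 0 := mul_eq_zero_of_right _ e13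
      have g2 : v 3 * (A 0 0 * A 1 1 - A 0 1 * A 1 0) = 0 := mul_eq_zero_of_right _ e01
      have e03 : (A 0 0 * A 1 3 - A 0 3 * A 1 0) = 0 := mul_zero_of (-v 1) _ (by linarith : (0:ℝ) < -v 1) (by linarith)
      exact ⟨e01, e02, e03, e12, e13, e23⟩
    · have a1 : 0 ≤ v 0 * (A 0 1 * A 1 3 - A 0 3 * A 1 1) := mul_nonneg h0.le h13
      have a2 : 0 ≤ (-v 1) * (A 0 0 * A 1 3 - A 0 3 * A 1 0) := mul_nonneg (by linarith : (0:ℝ) ≤ -v 1) h03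
      have a3 : 0 ≤ v 3 * (A 0 0 * A 1 1 - A 0 1 * A 1 0) := mul_nonneg h3.le h01
      have e13 : (A 0 1 * A 1 3 - A 0 3 * A 1 1) = 0 := mul_zero_of (v 0) _ h0 (by linarith)
      have e03 : (A 0 0 * A 1 3 - A 0 3 * A 1 0) = 0 := mul_zero_of (-v 1) _ (by linarith : (0:ℝ) < -v 1) (by linarith)
      have e01 : (A 0 0 * A 1 1 - A 0 1 * A 1 0) = 0 := mul_zero_of (v 3) _ h3 (by linarith)
      have f1 : v 2 * (A 0 0 * A 1 3 - A 0 3 * A 1 0) = 0 := mul_eq_zero_of_right _ e03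
      have b1 : 0 ≤ v 0 * (A 0 2 * A 1 3 - A 0 3 * A 1 2) := mul_nonneg h0.le h23
      have b2 : 0 ≤ v 3 * (A 0 0 * A 1 2 - A 0 2 * A 1 0) := mul_nonneg h3.le h02
      have e23 : (A 0 2 * A 1 3 - A 0 3 * A 1 2) = 0 := mul_zero_of (v 0) _ h0 (by linarith)
      have e02 : (A 0 0 * A 1 2 - A 0 2 * A 1 0) = 0 := mul_zero_of (v 3) _ h3 (by linarith)
      have g1 : v 1 * (A 0 0 * A 1 2 - A 0 2 * A 1 0) = 0 := mul_eq_zero_of_right _ e02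
      have g2 : v 2 * (A 0 0 * A 1 1 - A 0 1 * A 1 0) = 0 := mul_eq_zero_of_right _ e01
      have e12 : (A 0 1 * A 1 2 - A 0 2 * A 1 1) = 0 := mul_zero_of (v 0) _ h0 (by linarith)
      exact ⟨e01, e02, e03, e12, e13, e23⟩
  obtain ⟨e01, e02, e03, e12, e13, e23⟩ := hall
  have hallp : ∀ i j : Fin 4, A 0 i * A 1 j - A 0 j * A 1 i = 0 := by
    intro i j
    fin_cases i <;> fin_cases j <;> simp only [Fin.reduceFinMk, Fin.isValue] at * <;> linarith
  obtain ⟨I, h, hne⟩ := hnz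
  apply hne
  rw [minorMat, Matrix.det_fin_two]
  have := hallp ((I.orderIsoOfFin h 0 : Fin 4)) ((I.orderIsoOfFin h 1 : Fin 4))
  simp only [Matrix.of_apply]
  linarith
end
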